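/- For the three vectors of the column basis of the Fourier matrix F₃, each polarization vector p = (⟨v|Jx|v⟩, ⟨v|Jy|v⟩, ⟨v|Jz|v⟩) has norm 2√2/3, so each vector has 1-anticoherence measure 𝓐₁ = 1 - |p|²/j² with j = 1 equal to 1/9. -/

import Mathlib

/-! With `s = conj v₀ v₁ + conj v₁ v₂ = ⟨J₊⟩/√2`, the spin-1 expectations are `⟨Jx⟩ = √2 Re s`,
`⟨Jy⟩ = √2 Im s`, `⟨Jz⟩ = |v₀|² - |v₂|²`, so `|p|² = 2|s|² + (|v₀|² - |v₂|²)²`. A Fourier column is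
geometric, `vⱼ = wʲ/√3` with `|w| = 1`: then `|v₀| = |v₂|` and both terms of `s` equal `w/3`, giving
`|p|² = 2 · (2/3)² = 8/9`. -/

open Matrix Complex

noncomputable def Jz1 : Matrix (Fin 3) (Fin 3) ℂ := diagonal ![1, 0, -1]

noncomputable def Jx1 : Matrix (Fin 3) (Fin 3) ℂ :=
  (1 / (Real.sqrt 2 : ℂ)) • !![0, 1, 0; 1, 0, 1; 0, 1, 0]

noncomputable def Jy1 : Matrix (Fin 3) (Fin 3) ℂ :=
  (1 / (Real.sqrt 2 : ℂ)) • !![0, -I, 0; I, 0, -I; 0, I, 0]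

/-- The k-th column of the Fourier matrix F₃. -/
noncomputable def fourierCol (k : Fin 3) : Fin 3 → ℂ :=
  fun j => Complex.exp (2 * Real.pi * Complex.I / 3) ^ ((j : ℕ) * (k : ℕ)) / Real.sqrt 3

open ComplexConjugate

lemma ofReal_sqrt_two_ne_zero : (Real.sqrt 2 : ℂ) ≠ 0 := by
  exact_mod_cast (Real.sqrt_pos.2 two_pos).ne'

lemma ofReal_sqrt_two_sq : (Real.sqrt 2 : ℂ) ^ 2 = 2 := by
  exact_mod_cast Real.sq_sqrt zero_le_two

section Expectation

variable (v : Fin 3 → ℂ)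

lemma star_dotProduct_Jx1_mulVec :
    star v ⬝ᵥ Jx1 *ᵥ v = Real.sqrt 2 * ((conj (v 0) * v 1 + conj (v 1) * v 2).re : ℂ) := by
  rw [re_eq_add_conj]
  simp only [dotProduct, Pi.star_apply, RCLike.star_def, mulVec, Jx1, one_div, Matrix.smul_apply,
    of_apply, cons_val', cons_val_fin_one, smul_eq_mul, Fin.sum_univ_three, cons_val_zero,
    cons_val_one, cons_val, mul_zero, zero_mul, mul_one, zero_add, add_zero, map_add, map_mul,
    RingHomCompTriple.comp_apply, RingHom.id_apply]
  field_simp [ofReal_sqrt_two_ne_zero]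
  rw [ofReal_sqrt_two_sq]
  ring

lemma star_dotProduct_Jy1_mulVec :
    star v ⬝ᵥ Jy1 *ᵥ v = Real.sqrt 2 * ((conj (v 0) * v 1 + conj (v 1) * v 2).im : ℂ) := by
  rw [im_eq_sub_conj]
  simp only [dotProduct, Pi.star_apply, RCLike.star_def, mulVec, Jy1, one_div, Matrix.smul_apply,
    of_apply, cons_val', cons_val_fin_one, smul_eq_mul, Fin.sum_univ_three, cons_val_zero,
    cons_val_one, cons_val, mul_zero, zero_mul, mul_neg, neg_mul, zero_add, add_zero, map_add,
    map_mul, RingHomCompTriple.comp_apply, RingHom.id_apply]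
  field_simp [ofReal_sqrt_two_ne_zero]
  rw [ofReal_sqrt_two_sq, I_sq]
  ring

lemma star_dotProduct_Jz1_mulVec :
    star v ⬝ᵥ Jz1 *ᵥ v = ((‖v 0‖ ^ 2 - ‖v 2‖ ^ 2 : ℝ) : ℂ) := by
  simp [Jz1, mulVec, dotProduct, Fin.sum_univ_three, conj_mul', sub_eq_add_neg]

lemma polarization_sq_norm :
    ‖star v ⬝ᵥ Jx1 *ᵥ v‖ ^ 2 + ‖star v ⬝ᵥ Jy1 *ᵥ v‖ ^ 2 + ‖star v ⬝ᵥ Jz1 *ᵥ v‖ ^ 2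
      = 2 * ‖conj (v 0) * v 1 + conj (v 1) * v 2‖ ^ 2 + (‖v 0‖ ^ 2 - ‖v 2‖ ^ 2) ^ 2 := by
  set s := conj (v 0) * v 1 + conj (v 1) * v 2
  have hs : ‖s‖ ^ 2 = s.re ^ 2 + s.im ^ 2 := by rw [Complex.sq_norm, normSq_apply]; ring
  rw [star_dotProduct_Jx1_mulVec, star_dotProduct_Jy1_mulVec, star_dotProduct_Jz1_mulVec, hs]
  simp only [norm_mul, norm_real, Real.norm_eq_abs, mul_pow, sq_abs, Real.sq_sqrt zero_le_two]
  ring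

end Expectation

lemma polarization_sq_norm_of_geometric {v : Fin 3 → ℂ} {c w : ℂ} (hw : ‖w‖ = 1)
    (hv : ∀ j, v j = c * w ^ (j : ℕ)) :
    ‖star v ⬝ᵥ Jx1 *ᵥ v‖ ^ 2 + ‖star v ⬝ᵥ Jy1 *ᵥ v‖ ^ 2 + ‖star v ⬝ᵥ Jz1 *ᵥ v‖ ^ 2
      = 8 * ‖c‖ ^ 4 := by
  have hw' : conj w * w = 1 := by rw [conj_mul', hw]; norm_num
  have hs : conj (v 0) * v 1 + conj (v 1) * v 2 = 2 * ‖c‖ ^ 2 * w := by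
    simp only [hv, Fin.val_zero, Fin.val_one, Fin.val_two, pow_zero, pow_one, mul_one, map_mul]
    linear_combination (w + conj w * w * w) * conj_mul' c + ‖c‖ ^ 2 * w * hw'
  have hv0 : ‖v 0‖ = ‖c‖ := by simp [hv]
  have hv2 : ‖v 2‖ = ‖c‖ := by simp [hv, hw]
  rw [polarization_sq_norm, hs, hv0, hv2]
  simp only [norm_mul, norm_ofNat, norm_pow, norm_real, Real.norm_eq_abs, abs_norm, hw]
  ring

lemma norm_exp_two_pi_I_div_three : ‖exp (2 * Real.pi * I / 3)‖ = 1 := by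
  rw [show 2 * Real.pi * I / 3 = ((2 * Real.pi / 3 : ℝ) : ℂ) * I by push_cast; ring]
  exact norm_exp_ofReal_mul_I _

lemma fourierCol_eq_geometric (k j : Fin 3) :
    fourierCol k j = (Real.sqrt 3 : ℂ)⁻¹ * (exp (2 * Real.pi * I / 3) ^ (k : ℕ)) ^ (j : ℕ) := by
  rw [fourierCol, ← pow_mul, mul_comm (k : ℕ), div_eq_inv_mul]

lemma polarization_sq_norm_fourierCol (k : Fin 3) :
    ‖star (fourierCol k) ⬝ᵥ Jx1 *ᵥ fourierCol k‖ ^ 2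
      + ‖star (fourierCol k) ⬝ᵥ Jy1 *ᵥ fourierCol k‖ ^ 2
      + ‖star (fourierCol k) ⬝ᵥ Jz1 *ᵥ fourierCol k‖ ^ 2 = 8 / 9 := by
  rw [polarization_sq_norm_of_geometric (by rw [norm_pow, norm_exp_two_pi_I_div_three, one_pow])
    (fourierCol_eq_geometric k)]
  rw [norm_inv, norm_real, Real.norm_of_nonneg (Real.sqrt_nonneg 3), inv_pow,
    show Real.sqrt 3 ^ 4 = (Real.sqrt 3 ^ 2) ^ 2 by ring, Real.sq_sqrt zero_le_three]
  norm_num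

lemma sqrt_eight_ninths : Real.sqrt (8 / 9) = 2 * Real.sqrt 2 / 3 := by
  rw [show (8 / 9 : ℝ) = (2 * Real.sqrt 2 / 3) ^ 2 by
    rw [div_pow, mul_pow, Real.sq_sqrt zero_le_two]; norm_num]
  exact Real.sqrt_sq (by positivity)

theorem fourierBasis3_anticoherence_one_ninth (k : Fin 3) :
    let v := fourierCol k
    let px := star v ⬝ᵥ Jx1.mulVec v
    let py := star v ⬝ᵥ Jy1.mulVec v
    let pz := star v ⬝ᵥ Jz1.mulVec v
    Real.sqrt (‖px‖ ^ 2 + ‖py‖ ^ 2 + ‖pz‖ ^ 2)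
        = 2 * Real.sqrt 2 / 3 ∧
      1 - (‖px‖ ^ 2 + ‖py‖ ^ 2 + ‖pz‖ ^ 2) = 1 / 9 := by
  intro v px py pz
  have hp : ‖px‖ ^ 2 + ‖py‖ ^ 2 + ‖pz‖ ^ 2 = 8 / 9 := polarization_sq_norm_fourierCol k
  rw [hp, sqrt_eight_ninths]
  norm_num
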